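/- arXiv:2012.09738 — 2 statements merged into one kernel-verified Lean document; each statement's English description precedes it below -/
import Mathlib

section
/- Let M be a 2^n × 2^n real matrix with all entries in [-1,1], let I ⊆ (ZMod 2)^n be an index set, and let β = max_{i ∈ I} ∑_{j ≠ i} |M_{i,j}|. Let q_1, …, q_k be i.i.d. uniform samples from (ZMod 2)^n and M̂ = k^{-1} ∑_ℓ D_{q_ℓ} M D_{q_ℓ} with D_q = diag((-1)^{⟨v,q⟩}). If k ≥ 2 (log(2/δ) + n log 2 + log|I|) (1+β)²/ε², then with probability at least 1 − δ, simultaneously for all i ∈ I: |∑_{j ≠ i} M̂_{i,j}| ≤ ε and |M̂_{i,i} − M_{i,i}| ≤ ε. -/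
open Matrix Finset

/-- The sign vector `d_q` with entries `(-1)^{⟨v,q⟩}`. -/
noncomputable def signVec (n : ℕ) (q v : Fin n → ZMod 2) : ℝ :=
  (-1 : ℝ) ^ (∑ i, v i * q i : ZMod 2).val

/-- The sign-twirled average `M̂ = k⁻¹ ∑_ℓ D_{q_ℓ} M D_{q_ℓ}` for a sample
`qs : Fin k → (ZMod 2)^n`. -/
noncomputable def twirlAvg (n k : ℕ) (M : Matrix (Fin n → ZMod 2) (Fin n → ZMod 2) ℝ)
    (qs : Fin k → (Fin n → ZMod 2)) : Matrix (Fin n → ZMod 2) (Fin n → ZMod 2) ℝ :=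
  Matrix.of fun i j => (k : ℝ)⁻¹ * ∑ ℓ, signVec n (qs ℓ) i * M i j * signVec n (qs ℓ) j

/-!
Conjugating by `D_q` multiplies `M i j` by the character `signVec n q (i + j)`, so the diagonal of
`M̂` is exactly that of `M`, while `M̂ i j = M i j · k⁻¹ ∑_ℓ signVec n (q_ℓ) (i + j)` for `i ≠ j`.
For `v ≠ 0` the character `signVec n · v` is a mean-zero `±1` variable, hence sub-Gaussian, and a
Chernoff bound shows `|k⁻¹ ∑_ℓ signVec n (q_ℓ) v| ≥ τ := ε / (1 + β)` with probability at most
`2 exp (-k τ² / 2)`. Off that event every off-diagonal row sum of `M̂` is at most `τ β ≤ ε`, and a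
union bound over the at most `|I| 2ⁿ` pairs `(i, j)` costs `δ` exactly when `k` meets the bound.
-/

section Chernoff

variable {α ι : Type*} [Fintype α] [Fintype ι] [DecidableEq ι]

theorem sum_exp_mul_le_of_antisymm (s : α → ℝ) (hs : ∀ a, |s a| ≤ 1) (e : α ≃ α)
    (he : ∀ a, s (e a) = -s a) (l : ℝ) :
    ∑ a, Real.exp (l * s a) ≤ Fintype.card α * Real.exp (l ^ 2 / 2) := by
  have hsinh : ∑ a, Real.sinh (l * s a) = 0 := by
    have h := e.sum_comp fun a => Real.sinh (l * s a)
    simp only [he, mul_neg, Real.sinh_neg, sum_neg_distrib] at h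
    linarith
  have hcosh : ∀ a, Real.cosh (l * s a) ≤ Real.exp (l ^ 2 / 2) := fun a =>
    calc Real.cosh (l * s a) ≤ Real.cosh l := by
          rw [Real.cosh_le_cosh, abs_mul]
          exact mul_le_of_le_one_right (abs_nonneg l) (hs a)
      _ ≤ Real.exp (l ^ 2 / 2) := Real.cosh_le_exp_half_sq l
  calc ∑ a, Real.exp (l * s a)
      = ∑ a, Real.cosh (l * s a) + ∑ a, Real.sinh (l * s a) := by
        simp only [← sum_add_distrib, Real.cosh_add_sinh]
    _ ≤ Fintype.card α * Real.exp (l ^ 2 / 2) := by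
        rw [hsinh, add_zero, ← nsmul_eq_mul]
        exact sum_le_card_nsmul _ _ _ fun a _ => hcosh a

theorem sum_pi_exp_mul_sum (s : α → ℝ) (t : ℝ) :
    ∑ x : ι → α, Real.exp (t * ∑ i, s (x i)) = (∑ a, Real.exp (t * s a)) ^ Fintype.card ι := by
  classical
  simp only [mul_sum, Real.exp_sum]
  rw [← Fintype.prod_sum fun (_ : ι) a => Real.exp (t * s a), prod_const, card_univ]

theorem card_filter_le_sum_le (s : α → ℝ)
    (hs : ∀ l, ∑ a, Real.exp (l * s a) ≤ Fintype.card α * Real.exp (l ^ 2 / 2))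
    {t : ℝ} (ht : 0 ≤ t) :
    (#{x : ι → α | Fintype.card ι * t ≤ ∑ i, s (x i)} : ℝ)
      ≤ Real.exp (-(Fintype.card ι * t ^ 2 / 2)) * Fintype.card α ^ Fintype.card ι := by
  set c : ℝ := (Fintype.card ι : ℝ)
  set F := ({x : ι → α | c * t ≤ ∑ i, s (x i)} : Finset _)
  -- Markov's inequality for `exp (t ∑ s)`, whose total factors over the independent coordinates.
  have hmarkov : (#F : ℝ) * Real.exp (c * t ^ 2)
      ≤ Fintype.card α ^ Fintype.card ι * Real.exp (c * t ^ 2 / 2) :=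
    calc (#F : ℝ) * Real.exp (c * t ^ 2)
        = ∑ _x ∈ F, Real.exp (c * t ^ 2) := by rw [sum_const, nsmul_eq_mul]
      _ ≤ ∑ x ∈ F, Real.exp (t * ∑ i, s (x i)) := by
          refine sum_le_sum fun x hx => Real.exp_le_exp.mpr ?_
          have := mul_le_mul_of_nonneg_left (mem_filter.mp hx).2 ht
          linarith
      _ ≤ ∑ x : ι → α, Real.exp (t * ∑ i, s (x i)) :=
          sum_le_sum_of_subset_of_nonneg (subset_univ F) fun _ _ _ => (Real.exp_pos _).le
      _ = (∑ a, Real.exp (t * s a)) ^ Fintype.card ι := sum_pi_exp_mul_sum s t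
      _ ≤ (Fintype.card α * Real.exp (t ^ 2 / 2)) ^ Fintype.card ι :=
          pow_le_pow_left₀ (sum_nonneg fun _ _ => (Real.exp_pos _).le) (hs t) _
      _ = Fintype.card α ^ Fintype.card ι * Real.exp (c * t ^ 2 / 2) := by
          rw [mul_pow, ← Real.exp_nat_mul, mul_div_assoc]
  rw [← le_div_iff₀ (Real.exp_pos _), mul_div_assoc, ← Real.exp_sub] at hmarkov
  refine hmarkov.trans_eq ?_
  rw [mul_comm]
  ring_nf

theorem card_filter_le_abs_sum_le (s : α → ℝ)
    (hs : ∀ l, ∑ a, Real.exp (l * s a) ≤ Fintype.card α * Real.exp (l ^ 2 / 2))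
    {t : ℝ} (ht : 0 ≤ t) :
    (#{x : ι → α | Fintype.card ι * t ≤ |∑ i, s (x i)|} : ℝ)
      ≤ 2 * Real.exp (-(Fintype.card ι * t ^ 2 / 2)) * Fintype.card α ^ Fintype.card ι := by
  classical
  have hs_neg : ∀ l, ∑ a, Real.exp (l * -s a) ≤ Fintype.card α * Real.exp (l ^ 2 / 2) := by
    intro l
    simpa only [mul_neg, neg_mul, neg_sq] using hs (-l)
  set Fpos : Finset (ι → α) := {x | Fintype.card ι * t ≤ ∑ i, s (x i)}
  set Fneg : Finset (ι → α) := {x | Fintype.card ι * t ≤ ∑ i, -s (x i)}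
  have hsub : ({x : ι → α | Fintype.card ι * t ≤ |∑ i, s (x i)|} : Finset _) ⊆ Fpos ∪ Fneg := by
    intro x hx
    simp only [Fpos, Fneg, mem_filter, mem_univ, true_and, mem_union, sum_neg_distrib] at hx ⊢
    rcases le_abs'.mp hx with h | h
    · exact Or.inr (by linarith)
    · exact Or.inl h
  calc (#{x : ι → α | Fintype.card ι * t ≤ |∑ i, s (x i)|} : ℝ) ≤ #Fpos + #Fneg := by
        exact_mod_cast (card_le_card hsub).trans (card_union_le _ _)
    _ ≤ _ := by
        linarith [card_filter_le_sum_le (ι := ι) s hs ht,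
          card_filter_le_sum_le (ι := ι) (fun a => -s a) hs_neg ht]

end Chernoff

theorem card_filter_exists_le {α β : Type*} [Fintype α] (S : Finset β) (P : β → α → Prop)
    [∀ b, DecidablePred (P b)] {C : ℝ} (hC : ∀ b ∈ S, (#{x | P b x} : ℝ) ≤ C) :
    (#{x | ∃ b ∈ S, P b x} : ℝ) ≤ #S * C := by
  classical
  have hsub : ({x | ∃ b ∈ S, P b x} : Finset α) ⊆ S.biUnion fun b => {x | P b x} := by
    intro x hx
    simpa using hx
  calc (#{x | ∃ b ∈ S, P b x} : ℝ) ≤ ∑ b ∈ S, (#{x | P b x} : ℝ) := by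
        exact_mod_cast (card_le_card hsub).trans card_biUnion_le
    _ ≤ #S * C := by
        rw [← nsmul_eq_mul]
        exact sum_le_card_nsmul _ _ _ hC

theorem one_sub_le_card_filter_div {α : Type*} [Fintype α] [Nonempty α] (p : α → Prop)
    [DecidablePred p] {δ : ℝ} (h : (#{x | ¬p x} : ℝ) ≤ δ * Fintype.card α) :
    1 - δ ≤ (#{x | p x} : ℝ) / Fintype.card α := by
  have hpos : (0 : ℝ) < Fintype.card α := by exact_mod_cast Fintype.card_pos
  have hsplit := card_filter_add_card_filter_not (s := univ) p
  rw [card_univ] at hsplit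
  rw [le_div_iff₀ hpos]
  have : (#{x | p x} : ℝ) + #{x | ¬p x} = Fintype.card α := by exact_mod_cast hsplit
  linarith

theorem mul_exp_neg_le_one_of_log_le {C x : ℝ} (hC : 0 < C) (h : Real.log C ≤ x) :
    C * Real.exp (-x) ≤ 1 := by
  rw [Real.log_le_iff_le_exp hC] at h
  calc C * Real.exp (-x) ≤ Real.exp x * Real.exp (-x) := by gcongr
    _ = 1 := by rw [← Real.exp_add, add_neg_cancel, Real.exp_zero]

theorem two_mul_pow_mul_exp_le_of_sample_bound {n k : ℕ} {m β ε δ : ℝ} (hm : 0 < m)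
    (hβ : 0 < 1 + β) (hε : 0 < ε) (hδ : 0 < δ)
    (hk : (k : ℝ) ≥ 2 * (Real.log (2 / δ) + n * Real.log 2 + Real.log m) * (1 + β) ^ 2 / ε ^ 2) :
    2 * 2 ^ n * m * Real.exp (-(k * (ε / (1 + β)) ^ 2 / 2)) ≤ δ := by
  have hlog : Real.log (2 * 2 ^ n * m / δ) = Real.log (2 / δ) + n * Real.log 2 + Real.log m := by
    rw [show 2 * 2 ^ n * m / δ = 2 / δ * 2 ^ n * m by ring, Real.log_mul (by positivity) hm.ne',
      Real.log_mul (by positivity) (by positivity), Real.log_pow]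
  have hexponent : Real.log (2 * 2 ^ n * m / δ) ≤ k * (ε / (1 + β)) ^ 2 / 2 := by
    rw [ge_iff_le, div_le_iff₀ (by positivity)] at hk
    rw [hlog, show k * (ε / (1 + β)) ^ 2 / 2 = k * ε ^ 2 / (2 * (1 + β) ^ 2) by field_simp,
      le_div_iff₀ (by positivity)]
    linarith
  have h := mul_exp_neg_le_one_of_log_le (by positivity) hexponent
  rwa [div_mul_eq_mul_div, div_le_one hδ] at h

section Twirl

variable {n k : ℕ}

theorem signVec_eq (q v : Fin n → ZMod 2) : signVec n q v = (-1) ^ (v ⬝ᵥ q).val := rfl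

theorem neg_one_pow_val_add (a b : ZMod 2) :
    (-1 : ℝ) ^ (a + b).val = (-1) ^ a.val * (-1) ^ b.val := by
  rw [ZMod.val_add, ← neg_one_pow_eq_pow_mod_two, pow_add]

theorem signVec_add (q i j : Fin n → ZMod 2) :
    signVec n q (i + j) = signVec n q i * signVec n q j := by
  simp only [signVec_eq, add_dotProduct, neg_one_pow_val_add]

theorem signVec_zero (q : Fin n → ZMod 2) : signVec n q 0 = 1 := by
  simp [signVec_eq]

theorem abs_signVec (q v : Fin n → ZMod 2) : |signVec n q v| = 1 := abs_neg_one_pow _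

theorem exists_signVec_add_right_eq_neg {v : Fin n → ZMod 2} (hv : v ≠ 0) :
    ∃ u, ∀ q, signVec n (q + u) v = -signVec n q v := by
  obtain ⟨m, hm⟩ := Function.ne_iff.mp hv
  have hvm : v m = 1 := by
    have hZMod2 : ∀ a : ZMod 2, a ≠ 0 → a = 1 := by decide
    exact hZMod2 _ hm
  refine ⟨Pi.single m 1, fun q => ?_⟩
  rw [signVec_eq, signVec_eq, dotProduct_add, dotProduct_single, hvm, mul_one,
    neg_one_pow_val_add, ZMod.val_one, pow_one, mul_neg_one]

theorem card_filter_le_abs_sum_signVec_le {v : Fin n → ZMod 2} (hv : v ≠ 0) {t : ℝ} (ht : 0 ≤ t) :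
    (#{qs : Fin k → Fin n → ZMod 2 | k * t ≤ |∑ ℓ, signVec n (qs ℓ) v|} : ℝ)
      ≤ 2 * Real.exp (-(k * t ^ 2 / 2)) * ((2 : ℝ) ^ n) ^ k := by
  obtain ⟨u, hu⟩ := exists_signVec_add_right_eq_neg hv
  have h := card_filter_le_abs_sum_le (ι := Fin k) (fun q => signVec n q v)
    (sum_exp_mul_le_of_antisymm _ (fun q => (abs_signVec q v).le) (Equiv.addRight u) hu) ht
  simpa [ZMod.card] using h

theorem twirlAvg_apply (M : Matrix (Fin n → ZMod 2) (Fin n → ZMod 2) ℝ)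
    (qs : Fin k → Fin n → ZMod 2) (i j : Fin n → ZMod 2) :
    twirlAvg n k M qs i j = (k : ℝ)⁻¹ * M i j * ∑ ℓ, signVec n (qs ℓ) (i + j) := by
  simp only [twirlAvg, of_apply, signVec_add, mul_sum, mul_assoc]
  exact sum_congr rfl fun ℓ _ => by ring

theorem twirlAvg_apply_self (hk : k ≠ 0) (M : Matrix (Fin n → ZMod 2) (Fin n → ZMod 2) ℝ)
    (qs : Fin k → Fin n → ZMod 2) (i : Fin n → ZMod 2) :
    twirlAvg n k M qs i i = M i i := by
  rw [twirlAvg_apply, ZModModule.add_self, Fintype.sum_congr _ _ fun ℓ => signVec_zero (qs ℓ)]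
  simp only [sum_const, card_univ, Fintype.card_fin, nsmul_eq_mul, mul_one]
  field_simp

theorem abs_sum_twirlAvg_erase_le (hk : k ≠ 0) (M : Matrix (Fin n → ZMod 2) (Fin n → ZMod 2) ℝ)
    (qs : Fin k → Fin n → ZMod 2) (i : Fin n → ZMod 2) {τ : ℝ}
    (h : ∀ j ≠ i, |∑ ℓ, signVec n (qs ℓ) (i + j)| < k * τ) :
    |∑ j ∈ univ.erase i, twirlAvg n k M qs i j| ≤ τ * ∑ j ∈ univ.erase i, |M i j| := by
  rw [mul_sum]
  refine (abs_sum_le_sum_abs _ _).trans (sum_le_sum fun j hj => ?_)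
  rw [twirlAvg_apply, abs_mul, abs_mul, abs_inv, Nat.abs_cast]
  calc (k : ℝ)⁻¹ * |M i j| * |∑ ℓ, signVec n (qs ℓ) (i + j)|
      ≤ (k : ℝ)⁻¹ * |M i j| * (k * τ) := by gcongr; exact (h j (ne_of_mem_erase hj)).le
    _ = τ * |M i j| := by field_simp

theorem twirlAvg_row_bounds (hk : k ≠ 0) (M : Matrix (Fin n → ZMod 2) (Fin n → ZMod 2) ℝ)
    (qs : Fin k → Fin n → ZMod 2) (i : Fin n → ZMod 2) {β ε : ℝ}
    (hβ : ∑ j ∈ univ.erase i, |M i j| ≤ β) (hε : 0 ≤ ε)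
    (h : ∀ j ≠ i, |∑ ℓ, signVec n (qs ℓ) (i + j)| < k * (ε / (1 + β))) :
    |∑ j ∈ univ.erase i, twirlAvg n k M qs i j| ≤ ε ∧ |twirlAvg n k M qs i i - M i i| ≤ ε := by
  have hβ0 : 0 < 1 + β := by linarith [(sum_nonneg fun j _ => abs_nonneg (M i j)).trans hβ]
  refine ⟨(abs_sum_twirlAvg_erase_le hk M qs i h).trans ?_, ?_⟩
  · calc ε / (1 + β) * ∑ j ∈ univ.erase i, |M i j| ≤ ε / (1 + β) * β := by gcongr
      _ ≤ ε := by rw [div_mul_eq_mul_div, div_le_iff₀ hβ0]; nlinarith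
  · rwa [twirlAvg_apply_self hk, sub_self, abs_zero]

theorem card_filter_exists_le_abs_sum_signVec_le (I : Finset (Fin n → ZMod 2)) {t : ℝ}
    (ht : 0 ≤ t) :
    (#{qs : Fin k → Fin n → ZMod 2 |
        ∃ i ∈ I, ∃ j ≠ i, k * t ≤ |∑ ℓ, signVec n (qs ℓ) (i + j)|} : ℝ)
      ≤ #I * 2 ^ n * (2 * Real.exp (-(k * t ^ 2 / 2)) * ((2 : ℝ) ^ n) ^ k) := by
  set pairs := {p ∈ I ×ˢ (univ : Finset (Fin n → ZMod 2)) | p.1 ≠ p.2}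
  have hpairs : (#pairs : ℝ) ≤ #I * 2 ^ n := by
    exact_mod_cast (card_filter_le _ _).trans (by simp [ZMod.card])
  have hevent : ({qs : Fin k → Fin n → ZMod 2 |
        ∃ i ∈ I, ∃ j ≠ i, k * t ≤ |∑ ℓ, signVec n (qs ℓ) (i + j)|} : Finset _)
      = ({qs | ∃ p ∈ pairs, k * t ≤ |∑ ℓ, signVec n (qs ℓ) (p.1 + p.2)|} : Finset _) := by
    ext qs
    simp [pairs, ne_comm, and_assoc]
  rw [hevent]
  refine (card_filter_exists_le pairs _ fun p hp =>
    card_filter_le_abs_sum_signVec_le ?_ ht).trans (by gcongr)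
  rw [Ne, add_eq_zero_iff_eq_neg, ZModModule.neg_eq_self]
  exact (mem_filter.mp hp).2

end Twirl

theorem approximate_diagonalization_sample_complexity_general
    (n k : ℕ) (M : Matrix (Fin n → ZMod 2) (Fin n → ZMod 2) ℝ)
    (I : Finset (Fin n → ZMod 2)) (β ε δ : ℝ)
    (hβ : ∀ i ∈ I, ∑ j ∈ Finset.univ.erase i, |M i j| ≤ β)
    (hε : 0 < ε) (hδ0 : 0 < δ) (hδ1 : δ < 1)
    (hk : (k : ℝ) ≥ 2 * (Real.log (2 / δ) + n * Real.log 2 + Real.log I.card)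
            * (1 + β) ^ 2 / ε ^ 2) :
    1 - δ ≤
      ((Finset.univ.filter fun qs : Fin k → (Fin n → ZMod 2) =>
          ∀ i ∈ I, |∑ j ∈ Finset.univ.erase i, twirlAvg n k M qs i j| ≤ ε ∧
            |twirlAvg n k M qs i i - M i i| ≤ ε).card : ℝ)
        / ((2 ^ n : ℝ) ^ k) := by
  rcases I.eq_empty_or_nonempty with rfl | ⟨i₀, hi₀⟩
  · simpa using hδ0.le
  have hβ0 : 0 < 1 + β := by linarith [(sum_nonneg fun j _ => abs_nonneg _).trans (hβ i₀ hi₀)]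
  have hI : (1 : ℝ) ≤ #I := by exact_mod_cast card_pos.mpr ⟨i₀, hi₀⟩
  have hfail := two_mul_pow_mul_exp_le_of_sample_bound (by linarith) hβ0 hε hδ0 hk
  have hk0 : k ≠ 0 := by
    rintro rfl
    simp only [CharP.cast_eq_zero, zero_mul, zero_div, neg_zero, Real.exp_zero, mul_one] at hfail
    nlinarith [one_le_pow₀ (M₀ := ℝ) one_le_two (n := n)]
  have hcard : (Fintype.card (Fin k → Fin n → ZMod 2) : ℝ) = ((2 : ℝ) ^ n) ^ k := by
    simp [ZMod.card]
  rw [← hcard]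
  refine one_sub_le_card_filter_div _ ?_
  calc _ ≤ (#{qs : Fin k → Fin n → ZMod 2 |
          ∃ i ∈ I, ∃ j ≠ i, k * (ε / (1 + β)) ≤ |∑ ℓ, signVec n (qs ℓ) (i + j)|} : ℝ) := by
        refine Nat.cast_le.mpr (card_le_card fun qs => ?_)
        simp only [mem_filter, mem_univ, true_and]
        contrapose!
        exact fun h i hi => twirlAvg_row_bounds hk0 M qs i (hβ i hi) hε.le (h i hi)
    _ ≤ #I * 2 ^ n * (2 * Real.exp (-(k * (ε / (1 + β)) ^ 2 / 2)) * ((2 : ℝ) ^ n) ^ k) :=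
        card_filter_exists_le_abs_sum_signVec_le I (by positivity)
    _ ≤ δ * Fintype.card (Fin k → Fin n → ZMod 2) := by
        rw [hcard]
        linarith [mul_le_mul_of_nonneg_right hfail (by positivity : (0 : ℝ) ≤ ((2 : ℝ) ^ n) ^ k)]

/-- Sample complexity of approximate diagonalization: with
`k ≥ 2 (log(2/δ) + n log 2 + log |I|) (1+β)² / ε²` uniformly random sign twirls, the
averaged matrix `M̂` has, simultaneously for all `i ∈ I`, off-diagonal row sums at most
`ε` and diagonal entries within `ε` of those of `M`, with probability at least `1 - δ`. -/
theorem approximate_diagonalization_sample_complexity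
    (n k : ℕ) (M : Matrix (Fin n → ZMod 2) (Fin n → ZMod 2) ℝ)
    (I : Finset (Fin n → ZMod 2)) (β ε δ : ℝ)
    (hM : ∀ i j, |M i j| ≤ 1)
    (hβ : ∀ i ∈ I, ∑ j ∈ Finset.univ.erase i, |M i j| ≤ β)
    (hε : 0 < ε) (hδ0 : 0 < δ) (hδ1 : δ < 1)
    (hk : (k : ℝ) ≥ 2 * (Real.log (2 / δ) + n * Real.log 2 + Real.log I.card)
            * (1 + β) ^ 2 / ε ^ 2) :
    1 - δ ≤
      ((Finset.univ.filter fun qs : Fin k → (Fin n → ZMod 2) =>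
          ∀ i ∈ I, |∑ j ∈ Finset.univ.erase i, twirlAvg n k M qs i j| ≤ ε ∧
            |twirlAvg n k M qs i i - M i i| ≤ ε).card : ℝ)
        / ((2 ^ n : ℝ) ^ k) :=
  approximate_diagonalization_sample_complexity_general n k M I β ε δ hβ hε hδ0 hδ1 hk
end

section
/- For w ∈ (ZMod 2)^n, let Z_w be the 2^n × 2^n diagonal matrix with entries (Z_w)_{a,a} = (-1)^{⟨w,a⟩}, and for a probability vector p over (ZMod 2)^n let ⟨Z_w⟩_p = ∑_x (-1)^{⟨w,x⟩} p_x. If p̃ = A⋆ p for the twirled noise map A⋆ (A⋆_{a,b} = 2^{-n} ∑_s A_{a+s,b+s} with A left-stochastic), then ⟨Z_w⟩_{p̃} = λ_w ⟨Z_w⟩_p, where λ_w = 2^{-n} ∑_{a,b} (-1)^{⟨w,a+b⟩} A_{a,b}. -/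
open Matrix Finset

/-- The X-twirl of a readout noise map `A`. -/
noncomputable def twirl (n : ℕ) (A : Matrix (Fin n → ZMod 2) (Fin n → ZMod 2) ℝ) :
    Matrix (Fin n → ZMod 2) (Fin n → ZMod 2) ℝ :=
  Matrix.of fun a b => (1 / 2 ^ n : ℝ) * ∑ s, A (a + s) (b + s)

/-! The parity `x ↦ (-1) ^ ⟨w, x⟩` is an additive character `χ_w` of `(ZMod 2)ⁿ`. Averaging `A`
over simultaneous translations of both indices makes the twirl translation invariant, so every
character is a left eigenvector of it: `χ_w ᵥ* A⋆ = λ_w • χ_w`. Then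
`⟨Z_w⟩_{A⋆ p} = χ_w ⬝ᵥ (A⋆ *ᵥ p) = (χ_w ᵥ* A⋆) ⬝ᵥ p = λ_w ⟨Z_w⟩_p`. -/

theorem AddChar.sum_mul_sum_translate {G R : Type*} [AddCommGroup G] [Fintype G] [CommRing R]
    (ψ : AddChar G R) (M : Matrix G G R) (b : G) :
    ∑ x, ψ x * ∑ s, M (x + s) (b + s) = (∑ a, ∑ c, ψ (a - c) * M a c) * ψ b := by
  calc ∑ x, ψ x * ∑ s, M (x + s) (b + s)
      = ∑ s, ∑ a, ψ (a - s) * M a (b + s) := by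
        simp_rw [mul_sum]
        rw [sum_comm]
        exact sum_congr rfl fun s _ =>
          Fintype.sum_equiv (Equiv.addRight s) _ _ fun x => by simp
    _ = ∑ c, ∑ a, ψ (a - c + b) * M a c :=
        Fintype.sum_equiv (Equiv.addLeft b) _ _ fun s => sum_congr rfl fun a _ => by
          rw [Equiv.coe_addLeft, show a - (b + s) + b = a - s by abel]
    _ = (∑ a, ∑ c, ψ (a - c) * M a c) * ψ b := by
        rw [sum_comm, sum_mul]
        refine sum_congr rfl fun a _ => ?_
        rw [sum_mul]
        exact sum_congr rfl fun c _ => by rw [AddChar.map_add_eq_mul]; ring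

theorem ZMod.neg_one_pow_val_add {R : Type*} [Ring R] (u v : ZMod 2) :
    (-1 : R) ^ (u + v).val = (-1) ^ u.val * (-1) ^ v.val := by
  rw [ZMod.val_add, ← neg_one_pow_eq_pow_mod_two, pow_add]

noncomputable def parityChar {n : ℕ} (w : Fin n → ZMod 2) : AddChar (Fin n → ZMod 2) ℝ where
  toFun x := (-1) ^ (w ⬝ᵥ x).val
  map_zero_eq_one' := by simp
  map_add_eq_mul' x y := by rw [dotProduct_add, ZMod.neg_one_pow_val_add]

theorem parityChar_vecMul_twirl {n : ℕ} (w : Fin n → ZMod 2)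
    (A : Matrix (Fin n → ZMod 2) (Fin n → ZMod 2) ℝ) :
    parityChar w ᵥ* twirl n A =
      ((1 / 2 ^ n : ℝ) * ∑ a, ∑ c, parityChar w (a + c) * A a c) • ⇑(parityChar w) := by
  ext b
  simp only [vecMul, dotProduct, twirl, of_apply, Pi.smul_apply, smul_eq_mul]
  simp_rw [mul_left_comm _ (1 / 2 ^ n : ℝ), ← mul_sum, AddChar.sum_mul_sum_translate,
    ZModModule.sub_eq_add, mul_assoc]

theorem twirled_parity_expectation_general (n : ℕ)
    (A : Matrix (Fin n → ZMod 2) (Fin n → ZMod 2) ℝ)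
    (p : (Fin n → ZMod 2) → ℝ)
    (w : Fin n → ZMod 2) :
    ∑ x, (-1 : ℝ) ^ (∑ i, w i * x i : ZMod 2).val * (twirl n A).mulVec p x =
      ((1 / 2 ^ n : ℝ) *
        ∑ a, ∑ b, (-1 : ℝ) ^ (∑ i, w i * (a i + b i) : ZMod 2).val * A a b) *
      ∑ x, (-1 : ℝ) ^ (∑ i, w i * x i : ZMod 2).val * p x := by
  change parityChar w ⬝ᵥ (twirl n A *ᵥ p) =
    ((1 / 2 ^ n : ℝ) * ∑ a, ∑ b, parityChar w (a + b) * A a b) * (parityChar w ⬝ᵥ p)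
  rw [dotProduct_mulVec, parityChar_vecMul_twirl, smul_dotProduct, smul_eq_mul]

/-- Central identity of the mitigation method: under twirled readout noise, every parity
observable `⟨Z_w⟩` is multiplied by the single scalar `λ_w`:
`⟨Z_w⟩_{p̃} = λ_w ⟨Z_w⟩_p` where `p̃ = A⋆ p`. -/
theorem twirled_parity_expectation (n : ℕ)
    (A : Matrix (Fin n → ZMod 2) (Fin n → ZMod 2) ℝ)
    (hApos : ∀ a b, 0 ≤ A a b) (hAcol : ∀ b, ∑ a, A a b = 1)
    (p : (Fin n → ZMod 2) → ℝ) (hppos : ∀ x, 0 ≤ p x) (hpsum : ∑ x, p x = 1)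
    (w : Fin n → ZMod 2) :
    ∑ x, (-1 : ℝ) ^ (∑ i, w i * x i : ZMod 2).val * (twirl n A).mulVec p x =
      ((1 / 2 ^ n : ℝ) *
        ∑ a, ∑ b, (-1 : ℝ) ^ (∑ i, w i * (a i + b i) : ZMod 2).val * A a b) *
      ∑ x, (-1 : ℝ) ^ (∑ i, w i * x i : ZMod 2).val * p x :=
  twirled_parity_expectation_general n A p w
end
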